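/- arXiv:math/0410135 — 5 statements merged into one kernel-verified Lean document; each statement's English description precedes it below -/
import Mathlib

section
/- Let {e_i}_{i=1}^d be a basis of ℝ^d and set e_0 = 0. If vectors h_0, h_1, …, h_d ∈ ℝ^d satisfy ⟨h_i − h_j, e_i − e_j⟩ = 0 for every 0 ≤ i < j ≤ d, then there exists a unique skew-symmetric d×d real matrix X such that h_i = X e_i + h_0 for every 1 ≤ i ≤ d. -/
open Matrix

/- STATEMENT 0: Let {e_i}_{i=1}^d be a basis of ℝ^d and set e_0 = 0. If vectors
h_0, h_1, …, h_d ∈ ℝ^d satisfy ⟨h_i − h_j, e_i − e_j⟩ = 0 for every 0 ≤ i < j ≤ d, then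
there exists a unique skew-symmetric d×d real matrix X such that h_i = X e_i + h_0
for every 1 ≤ i ≤ d. -/

/-- The action of a `d × d` real matrix on `ℝ^d` (Euclidean space). -/
noncomputable def matAct {d : ℕ} (X : Matrix (Fin d) (Fin d) ℝ)
    (v : EuclideanSpace ℝ (Fin d)) : EuclideanSpace ℝ (Fin d) :=
  Matrix.toEuclideanLin X v

/-!
Let `T` be the linear map sending `e i` to `h i - h₀`. The hypotheses say that the quadratic
form `x ↦ ⟪T x, x⟫` vanishes at every `e i` and every `e i - e j`; by polarization the
symmetric bilinear form `⟪T x, y⟫ + ⟪T y, x⟫` vanishes on all pairs of basis vectors, so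
`T` is skew-adjoint. Its matrix in the standard basis is the required `X`, and it is unique
because a linear map is determined by its values on a basis.
-/

open Module
open scoped RealInnerProductSpace

section

variable {E : Type*} [NormedAddCommGroup E] [InnerProductSpace ℝ E] [FiniteDimensional ℝ E]
  {ι : Type*}

theorem LinearMap.adjoint_eq_neg_of_inner_basis (b : Basis ι ℝ E) {T : E →ₗ[ℝ] E}
    (hT : ∀ i j, ⟪T (b i), b j⟫ + ⟪T (b j), b i⟫ = 0) : LinearMap.adjoint T = -T :=
  b.ext fun i => InnerProductSpace.ext_inner_right_basis b fun j => by
    rw [LinearMap.adjoint_inner_left, LinearMap.neg_apply, inner_neg_left]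
    linarith [hT i j, real_inner_comm (b i) (T (b j))]

theorem LinearMap.existsUnique_adjoint_eq_neg_map_basis [LinearOrder ι] (b : Basis ι ℝ E)
    (v : ι → E) (hdiag : ∀ i, ⟪v i, b i⟫ = 0)
    (hoff : ∀ i j, i < j → ⟪v i - v j, b i - b j⟫ = 0) :
    ∃! T : E →ₗ[ℝ] E, LinearMap.adjoint T = -T ∧ ∀ i, T (b i) = v i := by
  have hlt : ∀ i j, i < j → ⟪v i, b j⟫ + ⟪v j, b i⟫ = 0 := fun i j hij => by
    have := hoff i j hij
    simp only [inner_sub_left, inner_sub_right] at this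
    linarith [hdiag i, hdiag j]
  have hsymm : ∀ i j, ⟪v i, b j⟫ + ⟪v j, b i⟫ = 0 := fun i j => by
    rcases lt_trichotomy i j with hij | rfl | hji
    · exact hlt i j hij
    · simp [hdiag]
    · linarith [hlt j i hji]
  refine ⟨b.constr ℝ v, ⟨?_, b.constr_basis ℝ v⟩, ?_⟩
  · exact LinearMap.adjoint_eq_neg_of_inner_basis b fun i j => by
      simpa only [b.constr_basis] using hsymm i j
  · rintro S ⟨-, hS⟩
    exact b.ext fun i => (hS i).trans (b.constr_basis ℝ v i).symm

end

theorem Matrix.transpose_eq_neg_iff_adjoint_toEuclideanLin {n : Type*} [Fintype n]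
    [DecidableEq n] (X : Matrix n n ℝ) :
    Xᵀ = -X ↔ LinearMap.adjoint (toEuclideanLin X) = -toEuclideanLin X := by
  rw [← toEuclideanLin_conjTranspose_eq_adjoint, conjTranspose_eq_transpose_of_trivial,
    ← map_neg, toEuclideanLin.injective.eq_iff]

theorem stmt0_general {d : ℕ} (e : Fin d → EuclideanSpace ℝ (Fin d))
    (hli : LinearIndependent ℝ e)
    (h : Fin d → EuclideanSpace ℝ (Fin d)) (h₀ : EuclideanSpace ℝ (Fin d))
    (hij : ∀ i j : Fin d, i < j → (inner ℝ (h i - h j) (e i - e j) : ℝ) = 0)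
    (h0j : ∀ j : Fin d, (inner ℝ (h j - h₀) (e j - 0) : ℝ) = 0) :
    ∃! X : Matrix (Fin d) (Fin d) ℝ,
      Xᵀ = -X ∧ ∀ i : Fin d, h i = matAct X (e i) + h₀ := by
  let b := basisOfLinearIndependentOfCardEqFinrank' e hli (by simp)
  have hb : ⇑b = e := coe_basisOfLinearIndependentOfCardEqFinrank' e hli _
  have hskew := LinearMap.existsUnique_adjoint_eq_neg_map_basis b (fun i => h i - h₀)
    (by simpa [hb] using h0j) (by simpa [hb] using hij)
  refine (toEuclideanLin.toEquiv.existsUnique_congr fun X => ?_).2 hskew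
  rw [transpose_eq_neg_iff_adjoint_toEuclideanLin, hb]
  exact and_congr_right' <| forall_congr' fun i => (eq_sub_iff_add_eq.trans eq_comm).symm

theorem stmt0 {d : ℕ} (e : Fin d → EuclideanSpace ℝ (Fin d))
    (hli : LinearIndependent ℝ e)
    (hsp : Submodule.span ℝ (Set.range e) = ⊤)
    (h : Fin d → EuclideanSpace ℝ (Fin d)) (h₀ : EuclideanSpace ℝ (Fin d))
    (hij : ∀ i j : Fin d, i < j → (inner ℝ (h i - h j) (e i - e j) : ℝ) = 0)
    (h0j : ∀ j : Fin d, (inner ℝ (h j - h₀) (e j - 0) : ℝ) = 0) :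
    ∃! X : Matrix (Fin d) (Fin d) ℝ,
      Xᵀ = -X ∧ ∀ i : Fin d, h i = matAct X (e i) + h₀ :=
  stmt0_general e hli h h₀ hij h0j
end

section
/- Let a > 0 and let x_0, x_1, …, x_d ∈ ℝ^d be a d-dimensional cell, i.e. |x_i − x_j| = a for all 0 ≤ i < j ≤ d and the vectors x_1 − x_0, …, x_d − x_0 form a basis of ℝ^d. If h_0, h_1, …, h_d ∈ ℝ^d satisfy ⟨h_i − h_j, x_i − x_j⟩ = 0 for every 0 ≤ i < j ≤ d, then there exist a skew-symmetric d×d real matrix X and a vector v ∈ ℝ^d such that h_i = X x_i + v for every 0 ≤ i ≤ d. -/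
open Matrix

/-!
Let `A` be the linear map sending each edge `x_i − x_0` of the cell to `h_i − h_0`; then
`h_i = A x_i + (h_0 − A x_0)`, and the hypothesis says that the quadratic form `⟪A v, v⟫`
vanishes on every edge `x_i − x_j`. By polarization the symmetric form `⟪A u, w⟫ + ⟪A w, u⟫`
vanishes on all pairs of basis vectors `x_i − x_0`, `x_j − x_0` (whose difference is again an
edge), hence identically, so `A` is skew-adjoint and its matrix is skew-symmetric.
-/

open scoped RealInnerProductSpace

section SkewAdjoint

variable {ι E : Type*} [NormedAddCommGroup E] [InnerProductSpace ℝ E]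

theorem inner_map_add_inner_map_eq_zero (A : E →ₗ[ℝ] E) {u w : E} (hu : ⟪A u, u⟫ = 0)
    (hw : ⟪A w, w⟫ = 0) (huw : ⟪A (u - w), u - w⟫ = 0) : ⟪A u, w⟫ + ⟪A w, u⟫ = 0 := by
  simp only [map_sub, inner_sub_left, inner_sub_right] at huw
  linarith

theorem LinearMap.adjoint_eq_neg_of_basis [FiniteDimensional ℝ E] (b : Module.Basis ι ℝ E)
    (A : E →ₗ[ℝ] E) (h₀ : ∀ i, ⟪A (b i), b i⟫ = 0)
    (h₁ : ∀ i j, ⟪A (b i - b j), b i - b j⟫ = 0) : A.adjoint = -A := by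
  have hskew : (innerₗ E).comp A = -(innerₗ E).compl₂ A :=
    LinearMap.ext_basis b b fun i j => by
      have := inner_map_add_inner_map_eq_zero A (h₀ i) (h₀ j) (h₁ i j)
      simp only [LinearMap.comp_apply, LinearMap.neg_apply, LinearMap.compl₂_apply,
        innerₗ_apply_apply]
      rw [real_inner_comm (A (b j)) (b i)]
      linarith
  refine ((LinearMap.eq_adjoint_iff _ _).2 fun u w => ?_).symm
  rw [LinearMap.neg_apply, inner_neg_left, neg_eq_iff_eq_neg]
  simpa using congr($hskew u w)

end SkewAdjoint

theorem Matrix.transpose_eq_neg_of_adjoint_toEuclideanLin {n : Type*} [Fintype n]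
    [DecidableEq n] (X : Matrix n n ℝ) (hX : X.toEuclideanLin.adjoint = -X.toEuclideanLin) :
    Xᵀ = -X :=
  toEuclideanLin.injective <| by
    rw [← conjTranspose_eq_transpose_of_trivial, toEuclideanLin_conjTranspose_eq_adjoint, hX,
      map_neg]

theorem stmt1_general {d : ℕ}
    (x : Fin (d + 1) → EuclideanSpace ℝ (Fin d))
    (hli : LinearIndependent ℝ (fun i : Fin d => x i.succ - x 0))
    (hsp : Submodule.span ℝ (Set.range fun i : Fin d => x i.succ - x 0) = ⊤)
    (h : Fin (d + 1) → EuclideanSpace ℝ (Fin d))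
    (horth : ∀ i j : Fin (d + 1), i < j → (inner ℝ (h i - h j) (x i - x j) : ℝ) = 0) :
    ∃ (X : Matrix (Fin d) (Fin d) ℝ) (v : EuclideanSpace ℝ (Fin d)),
      Xᵀ = -X ∧ ∀ i : Fin (d + 1), h i = matAct X (x i) + v := by
  set b := Module.Basis.mk hli hsp.ge
  have hb : ∀ i, b i = x i.succ - x 0 := Module.Basis.mk_apply hli hsp.ge
  set A := b.constr ℝ fun i => h i.succ - h 0
  have hA : ∀ i, A (x i - x 0) = h i - h 0 :=
    Fin.cases (by simp) fun i => by rw [← hb, b.constr_basis]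
  have hAsub (i j) : A (x i - x j) = h i - h j := by
    rw [← sub_sub_sub_cancel_right _ _ (x 0), map_sub, hA, hA, sub_sub_sub_cancel_right]
  have hq (i j) : ⟪A (x i - x j), x i - x j⟫ = 0 := by
    rcases lt_trichotomy i j with hij | rfl | hji
    · rw [hAsub]; exact horth i j hij
    · simp
    · rw [← neg_sub, map_neg, inner_neg_neg, hAsub]; exact horth j i hji
  have hskew : A.adjoint = -A := A.adjoint_eq_neg_of_basis b (fun i => by rw [hb]; exact hq _ _)
    fun i j => by rw [hb, hb, sub_sub_sub_cancel_right]; exact hq _ _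
  refine ⟨toEuclideanLin.symm A, h 0 - A (x 0),
    transpose_eq_neg_of_adjoint_toEuclideanLin _ (by simpa using hskew), fun i => ?_⟩
  rw [matAct, LinearEquiv.apply_symm_apply, ← sub_eq_iff_eq_add', sub_eq_sub_iff_sub_eq_sub,
    ← map_sub, hA]

theorem stmt1 {d : ℕ} (a : ℝ) (ha : 0 < a)
    (x : Fin (d + 1) → EuclideanSpace ℝ (Fin d))
    (hdist : ∀ i j : Fin (d + 1), i < j → ‖x i - x j‖ = a)
    (hli : LinearIndependent ℝ (fun i : Fin d => x i.succ - x 0))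
    (hsp : Submodule.span ℝ (Set.range fun i : Fin d => x i.succ - x 0) = ⊤)
    (h : Fin (d + 1) → EuclideanSpace ℝ (Fin d))
    (horth : ∀ i j : Fin (d + 1), i < j → (inner ℝ (h i - h j) (x i - x j) : ℝ) = 0) :
    ∃ (X : Matrix (Fin d) (Fin d) ℝ) (v : EuclideanSpace ℝ (Fin d)),
      Xᵀ = -X ∧ ∀ i : Fin (d + 1), h i = matAct X (x i) + v :=
  stmt1_general x hli hsp h horth
end

section
/- Let S₁ and S₂ be finite subsets of ℝ^d that are both infinitesimally rigid with bond length a, and suppose that the affine hull of S₁ ∩ S₂ has dimension at least d − 1. Then S₁ ∪ S₂ is infinitesimally rigid with bond length a. -/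
open Matrix
open scoped Classical

/-- A finite set `S ⊆ ℝ^d` is *infinitesimally rigid with bond length `a`* if every
assignment `h` of vectors to the points of `S` satisfying
`⟨h p − h q, p − q⟩ = 0` whenever `‖p − q‖ = a` is of the form `h p = X p + v`
with `X` skew-symmetric. -/
def InfinitesimallyRigidSet {d : ℕ} (a : ℝ)
    (S : Finset (EuclideanSpace ℝ (Fin d))) : Prop :=
  ∀ h : EuclideanSpace ℝ (Fin d) → EuclideanSpace ℝ (Fin d),
    (∀ p ∈ S, ∀ q ∈ S, ‖p - q‖ = a → (inner ℝ (h p - h q) (p - q) : ℝ) = 0) →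
    ∃ (X : Matrix (Fin d) (Fin d) ℝ) (v : EuclideanSpace ℝ (Fin d)),
      Xᵀ = -X ∧ ∀ p ∈ S, h p = matAct X p + v

/-- The dimension of the affine hull of a set, with the convention that the affine
hull of the empty set has dimension `−1`. -/
noncomputable def affineHullDim {d : ℕ} (s : Set (EuclideanSpace ℝ (Fin d))) : ℤ :=
  if s.Nonempty then
    (Module.finrank ℝ (affineSpan ℝ s).direction : ℤ)
  else -1

/-!
On `S₁` and on `S₂` a flex of `S₁ ∪ S₂` is an infinitesimal rigid motion, `p ↦ X₁ p + v₁` and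
`p ↦ X₂ p + v₂`, and the two agree on `S₁ ∩ S₂`. So the skew-symmetric map `A = X₁ - X₂` vanishes
on the vector span `W` of `S₁ ∩ S₂`, of codimension at most one. Skewness makes `A` map the line
`Wᗮ` into itself while `A u ⊥ u`, so `A` vanishes on `Wᗮ` too. Hence `A = 0`, and then `v₁ = v₂`.
-/

open Module LinearMap
open scoped RealInnerProductSpace

theorem vectorSpan_le_ker_of_forall_eq {k V W : Type*} [Ring k] [AddCommGroup V] [Module k V]
    [AddCommGroup W] [Module k W] {s : Set V} {f : V →ₗ[k] W} {c : W}
    (h : ∀ p ∈ s, f p = c) : vectorSpan k s ≤ ker f := by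
  rw [vectorSpan_def, Submodule.span_le]
  rintro _ ⟨p, hp, q, hq, rfl⟩
  simp [h p hp, h q hq]

section Skew

variable {E : Type*} [NormedAddCommGroup E] [InnerProductSpace ℝ E]

theorem LinearMap.inner_apply_self_eq_zero_of_skew {f : E →ₗ[ℝ] E}
    (hf : ∀ x y, ⟪f x, y⟫ = -⟪x, f y⟫) (x : E) : ⟪f x, x⟫ = 0 := by
  have := hf x x
  have := real_inner_comm x (f x)
  linarith

theorem LinearMap.orthogonal_le_ker_of_skew {f : E →ₗ[ℝ] E}
    (hf : ∀ x y, ⟪f x, y⟫ = -⟪x, f y⟫) {W : Submodule ℝ E} [FiniteDimensional ℝ Wᗮ]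
    (hW : W ≤ ker f) (hWperp : finrank ℝ Wᗮ ≤ 1) : Wᗮ ≤ ker f := by
  have maps_to : ∀ u ∈ Wᗮ, f u ∈ Wᗮ := fun u hu w hw => by
    rw [← neg_eq_zero, ← hf, mem_ker.mp (hW hw), inner_zero_left]
  obtain ⟨v₀, hv₀⟩ := finrank_le_one_iff.mp hWperp
  have hfv₀ : f v₀ = 0 := by
    obtain ⟨c, hc⟩ := hv₀ ⟨f v₀, maps_to _ v₀.2⟩
    have hc' : c • (v₀ : E) = f v₀ := congrArg Subtype.val hc
    rw [← inner_self_eq_zero (𝕜 := ℝ)]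
    calc ⟪f v₀, f v₀⟫ = ⟪f v₀, c • (v₀ : E)⟫ := by rw [hc']
      _ = 0 := by rw [real_inner_smul_right, inner_apply_self_eq_zero_of_skew hf, mul_zero]
  intro u hu
  obtain ⟨c, hc⟩ := hv₀ ⟨u, hu⟩
  have hc' : c • (v₀ : E) = u := congrArg Subtype.val hc
  rw [mem_ker, ← hc', map_smul, hfv₀, smul_zero]

theorem LinearMap.eq_zero_of_skew_of_finrank_orthogonal_le_one [FiniteDimensional ℝ E]
    {f : E →ₗ[ℝ] E} (hf : ∀ x y, ⟪f x, y⟫ = -⟪x, f y⟫) {W : Submodule ℝ E}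
    (hW : W ≤ ker f) (hWperp : finrank ℝ Wᗮ ≤ 1) : f = 0 := by
  have := sup_le hW (orthogonal_le_ker_of_skew hf hW hWperp)
  rw [Submodule.sup_orthogonal_of_hasOrthogonalProjection, top_le_iff] at this
  exact ker_eq_top.mp this

end Skew

theorem Matrix.inner_toEuclideanLin_of_transpose_eq_neg {d : ℕ} {X : Matrix (Fin d) (Fin d) ℝ}
    (hX : Xᵀ = -X) (x y : EuclideanSpace ℝ (Fin d)) :
    ⟪toEuclideanLin X x, y⟫ = -⟪x, toEuclideanLin X y⟫ := by
  rw [← LinearMap.adjoint_inner_left, ← toEuclideanLin_conjTranspose_eq_adjoint,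
    conjTranspose_eq_transpose_of_trivial, hX, map_neg, LinearMap.neg_apply, inner_neg_left,
    neg_neg]

theorem affineHullDim_of_nonempty {d : ℕ} {s : Set (EuclideanSpace ℝ (Fin d))}
    (hs : s.Nonempty) : affineHullDim s = finrank ℝ (vectorSpan ℝ s) := by
  rw [affineHullDim, if_pos hs, direction_affineSpan]

theorem eq_of_skew_motions_eqOn {d : ℕ} {s : Set (EuclideanSpace ℝ (Fin d))}
    (hs : (d : ℤ) - 1 ≤ affineHullDim s) {X₁ X₂ : Matrix (Fin d) (Fin d) ℝ}
    {v₁ v₂ : EuclideanSpace ℝ (Fin d)} (hX₁ : X₁ᵀ = -X₁) (hX₂ : X₂ᵀ = -X₂)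
    (h : ∀ p ∈ s, matAct X₁ p + v₁ = matAct X₂ p + v₂) : X₁ = X₂ ∧ v₁ = v₂ := by
  rcases s.eq_empty_or_nonempty with rfl | hne
  · have hd : d = 0 := by
      rw [affineHullDim, if_neg Set.not_nonempty_empty] at hs
      omega
    subst hd
    exact ⟨Subsingleton.elim _ _, Subsingleton.elim _ _⟩
  have hskew : (X₁ - X₂)ᵀ = -(X₁ - X₂) := by
    rw [transpose_sub, hX₁, hX₂]
    abel
  have hker : vectorSpan ℝ s ≤ ker (toEuclideanLin (X₁ - X₂)) :=
    vectorSpan_le_ker_of_forall_eq (c := v₂ - v₁) fun p hp => by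
      rw [map_sub, LinearMap.sub_apply, sub_eq_sub_iff_add_eq_add]
      exact (h p hp).trans (add_comm _ _)
  have hcodim : finrank ℝ (vectorSpan ℝ s)ᗮ ≤ 1 := by
    have := (vectorSpan ℝ s).finrank_add_finrank_orthogonal
    rw [affineHullDim_of_nonempty hne] at hs
    rw [finrank_euclideanSpace_fin] at this
    omega
  have hX : X₁ = X₂ := sub_eq_zero.mp <| (LinearEquiv.map_eq_zero_iff _).mp <|
    eq_zero_of_skew_of_finrank_orthogonal_le_one (inner_toEuclideanLin_of_transpose_eq_neg hskew)
      hker hcodim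
  obtain ⟨p, hp⟩ := hne
  exact ⟨hX, add_left_cancel (hX ▸ h p hp)⟩

theorem stmt3_general {d : ℕ} (a : ℝ)
    (S₁ S₂ : Finset (EuclideanSpace ℝ (Fin d)))
    (h₁ : InfinitesimallyRigidSet a S₁) (h₂ : InfinitesimallyRigidSet a S₂)
    (hdim : (d : ℤ) - 1 ≤ affineHullDim ((S₁ ∩ S₂ : Finset _) : Set (EuclideanSpace ℝ (Fin d)))) :
    InfinitesimallyRigidSet a (S₁ ∪ S₂) := by
  intro h hh
  obtain ⟨X₁, v₁, hX₁, hS₁⟩ := h₁ h fun p hp q hq =>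
    hh p (Finset.mem_union_left _ hp) q (Finset.mem_union_left _ hq)
  obtain ⟨X₂, v₂, hX₂, hS₂⟩ := h₂ h fun p hp q hq =>
    hh p (Finset.mem_union_right _ hp) q (Finset.mem_union_right _ hq)
  obtain ⟨rfl, rfl⟩ := eq_of_skew_motions_eqOn hdim hX₁ hX₂ fun p hp =>
    have hp := Finset.mem_inter.mp hp
    (hS₁ p hp.1).symm.trans (hS₂ p hp.2)
  exact ⟨X₁, v₁, hX₁, fun p hp => (Finset.mem_union.mp hp).elim (hS₁ p) (hS₂ p)⟩

theorem stmt3 {d : ℕ} (a : ℝ) (ha : 0 < a)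
    (S₁ S₂ : Finset (EuclideanSpace ℝ (Fin d)))
    (h₁ : InfinitesimallyRigidSet a S₁) (h₂ : InfinitesimallyRigidSet a S₂)
    (hdim : (d : ℤ) - 1 ≤ affineHullDim ((S₁ ∩ S₂ : Finset _) : Set (EuclideanSpace ℝ (Fin d)))) :
    InfinitesimallyRigidSet a (S₁ ∪ S₂) :=
  stmt3_general a S₁ S₂ h₁ h₂ hdim
end

section
/- Let z = (z_i)_{i=1}^N ∈ (ℝ^d)^N with Σ_{i=1}^N z_i = 0 and let x = (x_i)_{i=1}^N ∈ (ℝ^d)^N. If (θ₀, η₀) ∈ SO(d) × ℝ^d minimizes the function (θ, η) ↦ Σ_{i=1}^N |x_i − θ z_i − η|² over SO(d) × ℝ^d, then the d×d matrix Q(x) θ₀ is symmetric, where Q(x) has entries q^{αβ}(x) = Σ_{i=1}^N z_i^α x_i^β. -/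
/-!
Expanding the square and using `∑ i, z i = 0`, the objective at `(θ, η₀)` equals a quantity
independent of `θ ∈ SO(d)` minus `2 tr (Q θ)`, so `θ₀` maximizes `θ ↦ tr (Q θ)` on `SO(d)`.
For `α ≠ β`, let `R t` be the rotation by angle `t` in the `(α, β)`-plane and `S = Q θ₀`. Then
`tr (Q θ₀ R t) = tr S + (cos t - 1) (S α α + S β β) + sin t (S α β - S β α)` is maximal at
`t = 0`, and its derivative there, `S α β - S β α`, vanishes.
-/

open Matrix

/-- Membership in the special orthogonal group SO(d). -/
def IsSO {d : ℕ} (θ : Matrix (Fin d) (Fin d) ℝ) : Prop :=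
  θ * θᵀ = 1 ∧ θ.det = 1

/-- The matrix Q(x) with entries q^{αβ}(x) = Σ_i z_i^α x_i^β. -/
noncomputable def Qmat {d N : ℕ} (z x : Fin N → EuclideanSpace ℝ (Fin d)) :
    Matrix (Fin d) (Fin d) ℝ :=
  fun α β => ∑ i : Fin N, z i α * x i β

open scoped RealInnerProductSpace

section PlaneRotation

variable {n : Type*} [DecidableEq n] {α β : n}

def planeProj (α β : n) : Matrix n n ℝ := single α α 1 + single β β 1

def planeGen (α β : n) : Matrix n n ℝ := single β α 1 - single α β 1

noncomputable def planeRotation (α β : n) (t : ℝ) : Matrix n n ℝ :=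
  1 + (Real.cos t - 1) • planeProj α β + Real.sin t • planeGen α β

theorem transpose_planeProj : (planeProj α β)ᵀ = planeProj α β := by
  simp [planeProj]

theorem transpose_planeGen : (planeGen α β)ᵀ = -planeGen α β := by
  simp [planeGen]

theorem planeRotation_zero : planeRotation α β 0 = 1 := by
  simp [planeRotation]

theorem transpose_planeRotation (t : ℝ) : (planeRotation α β t)ᵀ = planeRotation α β (-t) := by
  simp [planeRotation, transpose_planeProj, transpose_planeGen]

variable [Fintype n]

theorem planeProj_mul_self (h : α ≠ β) : planeProj α β * planeProj α β = planeProj α β := by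
  simp [planeProj, add_mul, mul_add, h, h.symm]

theorem planeGen_mul_self (h : α ≠ β) : planeGen α β * planeGen α β = -planeProj α β := by
  simp only [planeGen, mul_sub, sub_mul, ne_eq, h, not_false_eq_true, single_mul_single_of_ne,
    single_mul_single_same, mul_one, zero_sub, h.symm, sub_zero, planeProj, neg_add_rev]
  abel

theorem planeProj_mul_planeGen (h : α ≠ β) : planeProj α β * planeGen α β = planeGen α β := by
  simp [planeProj, planeGen, add_mul, mul_sub, h, h.symm]

theorem planeGen_mul_planeProj (h : α ≠ β) : planeGen α β * planeProj α β = planeGen α β := by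
  simp only [planeGen, planeProj, mul_add, sub_mul, single_mul_single_same, mul_one, ne_eq, h.symm,
    not_false_eq_true, single_mul_single_of_ne, sub_zero, h, zero_sub]
  abel

theorem planeRotation_mul_planeRotation (h : α ≠ β) (s t : ℝ) :
    planeRotation α β s * planeRotation α β t = planeRotation α β (s + t) := by
  simp only [planeRotation, Real.cos_add, Real.sin_add, mul_add, add_mul, smul_mul_smul_comm,
    one_mul, mul_one, planeProj_mul_self h, planeGen_mul_self h, planeProj_mul_planeGen h,
    planeGen_mul_planeProj h, smul_neg]
  module

theorem planeRotation_mul_transpose (h : α ≠ β) (t : ℝ) :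
    planeRotation α β t * (planeRotation α β t)ᵀ = 1 := by
  rw [transpose_planeRotation, planeRotation_mul_planeRotation h, add_neg_cancel,
    planeRotation_zero]

theorem det_planeRotation (h : α ≠ β) (t : ℝ) : (planeRotation α β t).det = 1 := by
  have hsq : (planeRotation α β t).det ^ 2 = 1 := by
    simpa [sq, det_transpose] using congrArg det (planeRotation_mul_transpose h t)
  -- `R t = R (t/2) * R (t/2)`, so its determinant is a square and cannot be `-1`
  have hnonneg : 0 ≤ (planeRotation α β t).det := by
    rw [← add_halves t, ← planeRotation_mul_planeRotation h, det_mul]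
    exact mul_self_nonneg _
  nlinarith

theorem trace_mul_planeProj (A : Matrix n n ℝ) (α β : n) :
    trace (A * planeProj α β) = A α α + A β β := by
  simp [planeProj, mul_add, trace_mul_single]

theorem trace_mul_planeGen (A : Matrix n n ℝ) (α β : n) :
    trace (A * planeGen α β) = A α β - A β α := by
  simp [planeGen, mul_sub, trace_mul_single]

theorem trace_mul_planeRotation (A : Matrix n n ℝ) (α β : n) (t : ℝ) :
    trace (A * planeRotation α β t) = trace A + (Real.cos t - 1) * (A α α + A β β)
      + Real.sin t * (A α β - A β α) := by
  rw [planeRotation, mul_add, mul_add, Matrix.mul_smul, Matrix.mul_smul, mul_one, trace_add,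
    trace_add, trace_smul, trace_smul, trace_mul_planeProj, trace_mul_planeGen, smul_eq_mul, smul_eq_mul]

end PlaneRotation

theorem IsSO.mul {d : ℕ} {θ ψ : Matrix (Fin d) (Fin d) ℝ} (hθ : IsSO θ) (hψ : IsSO ψ) :
    IsSO (θ * ψ) := by
  refine ⟨?_, by rw [det_mul, hθ.2, hψ.2, mul_one]⟩
  rw [transpose_mul, mul_assoc, ← mul_assoc ψ, hψ.1, one_mul, hθ.1]

theorem isSO_planeRotation {d : ℕ} {α β : Fin d} (h : α ≠ β) (t : ℝ) :
    IsSO (planeRotation α β t) :=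
  ⟨planeRotation_mul_transpose h t, det_planeRotation h t⟩

theorem transpose_mul_eq_of_forall_trace_mul_le {d : ℕ} {A θ₀ : Matrix (Fin d) (Fin d) ℝ}
    (hθ₀ : IsSO θ₀) (hmax : ∀ θ, IsSO θ → trace (A * θ) ≤ trace (A * θ₀)) :
    (A * θ₀)ᵀ = A * θ₀ := by
  set S := A * θ₀
  ext β α
  rw [transpose_apply]
  rcases eq_or_ne α β with rfl | hne
  · rfl
  set g : ℝ → ℝ := fun t => (Real.cos t - 1) * (S α α + S β β) + Real.sin t * (S α β - S β α)
  have hg_max : IsLocalMax g 0 := Filter.Eventually.of_forall fun t => by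
    have := hmax _ (hθ₀.mul (isSO_planeRotation hne t))
    rw [← mul_assoc, trace_mul_planeRotation] at this
    simp only [g, Real.cos_zero, Real.sin_zero]
    linarith
  have hg_deriv : HasDerivAt g (S α β - S β α) 0 := by
    have := (((Real.hasDerivAt_cos 0).sub_const 1).mul_const (S α α + S β β)).add
      ((Real.hasDerivAt_sin 0).mul_const (S α β - S β α))
    simp only [Real.sin_zero, Real.cos_zero, neg_zero, zero_mul, one_mul, zero_add] at this
    exact this
  linarith [hg_max.hasDerivAt_eq_zero hg_deriv]

theorem norm_matAct {d : ℕ} {θ : Matrix (Fin d) (Fin d) ℝ} (hθ : θ * θᵀ = 1)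
    (v : EuclideanSpace ℝ (Fin d)) : ‖matAct θ v‖ = ‖v‖ := by
  have hθ' : θᵀ * θ = 1 := mul_eq_one_comm.mp hθ
  rw [← sq_eq_sq₀ (norm_nonneg _) (norm_nonneg _), ← real_inner_self_eq_norm_sq,
    ← real_inner_self_eq_norm_sq, EuclideanSpace.inner_eq_star_dotProduct,
    EuclideanSpace.inner_eq_star_dotProduct]
  simp only [star_trivial, matAct, ofLp_toLpLin, toLin'_apply]
  rw [dotProduct_mulVec, ← vecMul_transpose, vecMul_vecMul, hθ', vecMul_one]

theorem sum_inner_matAct {d N : ℕ} (z x : Fin N → EuclideanSpace ℝ (Fin d))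
    (θ : Matrix (Fin d) (Fin d) ℝ) :
    ∑ i, ⟪x i, matAct θ (z i)⟫ = trace (Qmat z x * θ) := by
  simp only [matAct, Qmat, trace, diag, mul_apply, PiLp.inner_apply, ofLp_toLpLin, toLin'_apply,
    mulVec, dotProduct, RCLike.inner_apply, conj_trivial, Finset.sum_mul]
  rw [Finset.sum_comm]
  conv_rhs => rw [Finset.sum_comm]
  refine Finset.sum_congr rfl fun α _ => ?_
  rw [Finset.sum_comm]
  refine Finset.sum_congr rfl fun β _ => Finset.sum_congr rfl fun i _ => ?_
  ring

theorem sum_norm_sub_matAct_sub_sq {d N : ℕ} {z : Fin N → EuclideanSpace ℝ (Fin d)}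
    (hz : ∑ i, z i = 0) (x : Fin N → EuclideanSpace ℝ (Fin d))
    {θ : Matrix (Fin d) (Fin d) ℝ} (hθ : θ * θᵀ = 1) (η : EuclideanSpace ℝ (Fin d)) :
    ∑ i, ‖x i - matAct θ (z i) - η‖ ^ 2
      = ∑ i, (‖x i - η‖ ^ 2 + ‖z i‖ ^ 2) - 2 * trace (Qmat z x * θ) := by
  have hη : ∑ i, ⟪η, matAct θ (z i)⟫ = 0 := by
    simp only [matAct]
    rw [← inner_sum, ← map_sum, hz, map_zero, inner_zero_right]
  have hterm : ∀ i, ‖x i - matAct θ (z i) - η‖ ^ 2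
      = ‖x i - η‖ ^ 2 + ‖z i‖ ^ 2 - 2 * ⟪x i, matAct θ (z i)⟫ + 2 * ⟪η, matAct θ (z i)⟫ := by
    intro i
    rw [sub_right_comm, norm_sub_sq_real, norm_matAct hθ, inner_sub_left]
    ring
  simp only [hterm, Finset.sum_add_distrib, Finset.sum_sub_distrib, ← Finset.mul_sum, hη,
    sum_inner_matAct]
  ring

theorem stmt14 {d N : ℕ}
    (z x : Fin N → EuclideanSpace ℝ (Fin d)) (hz : ∑ i : Fin N, z i = 0)
    (θ₀ : Matrix (Fin d) (Fin d) ℝ) (η₀ : EuclideanSpace ℝ (Fin d)) (hθ₀ : IsSO θ₀)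
    (hmin : ∀ (θ : Matrix (Fin d) (Fin d) ℝ) (η : EuclideanSpace ℝ (Fin d)), IsSO θ →
      ∑ i : Fin N, ‖x i - matAct θ₀ (z i) - η₀‖ ^ 2 ≤
        ∑ i : Fin N, ‖x i - matAct θ (z i) - η‖ ^ 2) :
    (Qmat z x * θ₀)ᵀ = Qmat z x * θ₀ := by
  refine transpose_mul_eq_of_forall_trace_mul_le hθ₀ fun θ hθ => ?_
  have h := hmin θ η₀ hθ
  rw [sum_norm_sub_matAct_sub_sq hz x hθ₀.1, sum_norm_sub_matAct_sub_sq hz x hθ.1] at h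
  linarith
end

section
/- Let e_1, …, e_d ∈ ℝ^d satisfy ⟨e_α, e_β⟩ = (1 + δ_{αβ})/2 and let Λ_d = {Σ_{α=1}^d ξ_α e_α : ξ ∈ ℤ^d} be the d-dimensional triangular lattice. Then c(Λ_d) := inf{|x| : x ∈ Λ_d, |x| ≠ 0 and |x| ≠ 1} equals 2 when d = 1, equals √3 when d = 2, and equals √2 when d ≥ 3; moreover in each case the infimum is attained by some lattice vector. -/
/-!
Expanding the square with the Gram matrix `(1 + δ_{αβ})/2` gives
`2 |Σ ξ_α e_α|² = (Σ ξ_α)² + Σ ξ_α²`, an even integer, so every squared lattice length is a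
non-negative integer and the problem becomes one about the integer values of this quadratic form.
For `d = 1` these values are the squares; for `d = 2` the form is `x² + xy + y²`, which never
takes the value `2` since it is never `≡ 2 (mod 4)`; for `d ≥ 3` the vector `e₁ + e₂ - e₃` has
squared length `2`.
-/

open Finset

section TriangularForm

variable {ι : Type*} [Fintype ι]

def triangularNormSq (ξ : ι → ℤ) : ℤ :=
  ((∑ i, ξ i) ^ 2 + ∑ i, ξ i ^ 2) / 2

lemma two_mul_triangularNormSq (ξ : ι → ℤ) :
    2 * triangularNormSq ξ = (∑ i, ξ i) ^ 2 + ∑ i, ξ i ^ 2 := by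
  have h_even : Even ((∑ i, ξ i) ^ 2 + ∑ i, ξ i ^ 2) := by
    have h_split : (∑ i, ξ i) ^ 2 + ∑ i, ξ i ^ 2
        = (∑ i, ξ i) * (∑ i, ξ i + 1) + ∑ i, ξ i * (ξ i - 1) := by
      simp only [mul_sub, mul_one, sum_sub_distrib, mul_add, sq]
      ring
    rw [h_split]
    exact (Int.even_mul_succ_self _).add (even_sum _ fun i _ => Int.even_mul_pred_self _)
  exact Int.mul_ediv_cancel' h_even.two_dvd

lemma triangularNormSq_nonneg (ξ : ι → ℤ) : 0 ≤ triangularNormSq ξ := by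
  have := two_mul_triangularNormSq ξ
  have : 0 ≤ (∑ i, ξ i) ^ 2 + ∑ i, ξ i ^ 2 := by positivity
  omega

variable [DecidableEq ι]

lemma triangularNormSq_single_add_single_sub_single {a b c : ι}
    (hab : a ≠ b) (hac : a ≠ c) (hbc : b ≠ c) :
    triangularNormSq (Pi.single a 1 + Pi.single b 1 - Pi.single c 1 : ι → ℤ) = 2 := by
  set ξ : ι → ℤ := Pi.single a 1 + Pi.single b 1 - Pi.single c 1
  have h_sum : ∑ i, ξ i = 1 := by simp [ξ, sum_add_distrib, sum_sub_distrib]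
  have h_sq (i : ι) : ξ i ^ 2 = (Pi.single a 1 + Pi.single b 1 + Pi.single c 1 : ι → ℤ) i := by
    by_cases ha : i = a <;> by_cases hb : i = b <;> by_cases hc : i = c <;> simp_all [ξ]
  have h_sum_sq : ∑ i, ξ i ^ 2 = 3 := by
    rw [sum_congr rfl fun i _ => h_sq i]
    simp [sum_add_distrib]
  have := two_mul_triangularNormSq ξ
  rw [h_sum, h_sum_sq] at this
  omega

variable {E : Type*} [NormedAddCommGroup E] [InnerProductSpace ℝ E]

lemma norm_sq_sum_smul_eq_triangularNormSq (e : ι → E)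
    (he : ∀ α β, (inner ℝ (e α) (e β) : ℝ) = (1 + if α = β then (1 : ℝ) else 0) / 2)
    (ξ : ι → ℤ) :
    ‖∑ i, (ξ i : ℝ) • e i‖ ^ 2 = triangularNormSq ξ := by
  have h_cast : ((triangularNormSq ξ : ℤ) : ℝ) = ((∑ i, (ξ i : ℝ)) ^ 2 + ∑ i, (ξ i : ℝ) ^ 2) / 2 := by
    rw [eq_div_iff two_ne_zero, mul_comm]
    exact_mod_cast two_mul_triangularNormSq ξ
  rw [h_cast, ← real_inner_self_eq_norm_sq, sum_inner]
  simp_rw [inner_sum, real_inner_smul_left, real_inner_smul_right, he]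
  simp only [mul_add, add_div, mul_div_assoc', mul_one, mul_ite, mul_zero, ite_div, zero_div,
    sum_add_distrib, sum_ite_eq, mem_univ, if_true, ← sum_div, sq, sum_mul_sum]

lemma norm_sum_smul_eq_sqrt_triangularNormSq (e : ι → E)
    (he : ∀ α β, (inner ℝ (e α) (e β) : ℝ) = (1 + if α = β then (1 : ℝ) else 0) / 2)
    (ξ : ι → ℤ) :
    ‖∑ i, (ξ i : ℝ) • e i‖ = √(triangularNormSq ξ : ℝ) := by
  rw [← norm_sq_sum_smul_eq_triangularNormSq e he, Real.sqrt_sq (norm_nonneg _)]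

lemma isLeast_lattice_norms_of_isLeast_triangularNormSq (e : ι → E)
    (he : ∀ α β, (inner ℝ (e α) (e β) : ℝ) = (1 + if α = β then (1 : ℝ) else 0) / 2) {m : ℤ}
    (hm : IsLeast {n : ℤ | ∃ ξ : ι → ℤ, n = triangularNormSq ξ ∧ n ≠ 0 ∧ n ≠ 1} m) :
    IsLeast {r : ℝ | ∃ ξ : ι → ℤ, r = ‖∑ i, (ξ i : ℝ) • e i‖ ∧ r ≠ 0 ∧ r ≠ 1} √(m : ℝ) := by
  have h_image : {r : ℝ | ∃ ξ : ι → ℤ, r = ‖∑ i, (ξ i : ℝ) • e i‖ ∧ r ≠ 0 ∧ r ≠ 1}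
      = (fun n : ℤ => √(n : ℝ)) ''
          {n : ℤ | ∃ ξ : ι → ℤ, n = triangularNormSq ξ ∧ n ≠ 0 ∧ n ≠ 1} := by
    ext r
    simp only [Set.mem_ofPred_eq, Set.mem_image, norm_sum_smul_eq_sqrt_triangularNormSq e he]
    constructor
    · rintro ⟨ξ, rfl, h0, h1⟩
      refine ⟨_, ⟨ξ, rfl, ?_, ?_⟩, rfl⟩
      · exact_mod_cast fun h => h0 (by simp [h])
      · exact_mod_cast fun h => h1 (by simp [h])
    · rintro ⟨_, ⟨ξ, rfl, h0, h1⟩, rfl⟩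
      have h_nonneg : (0 : ℝ) ≤ triangularNormSq ξ := by exact_mod_cast triangularNormSq_nonneg ξ
      exact ⟨ξ, rfl, by simpa [Real.sqrt_eq_zero h_nonneg] using h0,
        by simpa [Real.sqrt_eq_one] using h1⟩
  rw [h_image]
  exact (Real.sqrt_monotone.comp Int.cast_mono).map_isLeast hm

end TriangularForm

lemma isLeast_triangularNormSq_fin_one :
    IsLeast {n : ℤ | ∃ ξ : Fin 1 → ℤ, n = triangularNormSq ξ ∧ n ≠ 0 ∧ n ≠ 1} 4 := by
  have h_eq (ξ : Fin 1 → ℤ) : triangularNormSq ξ = ξ 0 ^ 2 := by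
    have := two_mul_triangularNormSq ξ
    simp only [Fin.sum_univ_one] at this
    omega
  refine ⟨⟨fun _ => 2, by rw [h_eq]; norm_num, by norm_num, by norm_num⟩, ?_⟩
  rintro _ ⟨ξ, rfl, h0, h1⟩
  rw [h_eq] at h0 h1 ⊢
  have h_ne_zero : ξ 0 ≠ 0 := fun h => h0 (by simp [h])
  have h_ne_one : ξ 0 ≠ 1 := fun h => h1 (by simp [h])
  have h_ne_neg_one : ξ 0 ≠ -1 := fun h => h1 (by simp [h])
  rcases (show ξ 0 ≤ -2 ∨ 2 ≤ ξ 0 by omega) with h | h <;> nlinarith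

lemma isLeast_triangularNormSq_fin_two :
    IsLeast {n : ℤ | ∃ ξ : Fin 2 → ℤ, n = triangularNormSq ξ ∧ n ≠ 0 ∧ n ≠ 1} 3 := by
  have h_eq (ξ : Fin 2 → ℤ) : triangularNormSq ξ = ξ 0 ^ 2 + ξ 0 * ξ 1 + ξ 1 ^ 2 := by
    have := two_mul_triangularNormSq ξ
    simp only [Fin.sum_univ_two] at this
    linarith
  refine ⟨⟨fun _ => 1, by rw [h_eq]; norm_num, by norm_num, by norm_num⟩, ?_⟩
  rintro _ ⟨ξ, rfl, h0, h1⟩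
  have h2 : triangularNormSq ξ ≠ 2 := by
    intro h
    have h_mod : ∀ x y : ZMod 4, x ^ 2 + x * y + y ^ 2 ≠ 2 := by decide
    apply h_mod (ξ 0) (ξ 1)
    exact_mod_cast congrArg (Int.cast : ℤ → ZMod 4) ((h_eq ξ).symm.trans h)
  have := triangularNormSq_nonneg ξ
  show (3 : ℤ) ≤ _
  omega

lemma isLeast_triangularNormSq_of_three_le {d : ℕ} (hd : 3 ≤ d) :
    IsLeast {n : ℤ | ∃ ξ : Fin d → ℤ, n = triangularNormSq ξ ∧ n ≠ 0 ∧ n ≠ 1} 2 := by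
  refine ⟨?_, ?_⟩
  · refine ⟨_, (triangularNormSq_single_add_single_sub_single (a := ⟨0, by omega⟩)
      (b := ⟨1, by omega⟩) (c := ⟨2, by omega⟩) ?_ ?_ ?_).symm, by norm_num, by norm_num⟩ <;>
      simp [Fin.ext_iff]
  · rintro _ ⟨ξ, rfl, h0, h1⟩
    have := triangularNormSq_nonneg ξ
    show (2 : ℤ) ≤ _
    omega

theorem stmt18 {d : ℕ} (e : Fin d → EuclideanSpace ℝ (Fin d))
    (he : ∀ α β : Fin d,
      (inner ℝ (e α) (e β) : ℝ) = (1 + if α = β then (1 : ℝ) else 0) / 2) :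
    (d = 1 → IsLeast {r : ℝ | ∃ ξ : Fin d → ℤ,
        r = ‖∑ α : Fin d, (ξ α : ℝ) • e α‖ ∧ r ≠ 0 ∧ r ≠ 1} 2) ∧
    (d = 2 → IsLeast {r : ℝ | ∃ ξ : Fin d → ℤ,
        r = ‖∑ α : Fin d, (ξ α : ℝ) • e α‖ ∧ r ≠ 0 ∧ r ≠ 1} (Real.sqrt 3)) ∧
    (3 ≤ d → IsLeast {r : ℝ | ∃ ξ : Fin d → ℤ,
        r = ‖∑ α : Fin d, (ξ α : ℝ) • e α‖ ∧ r ≠ 0 ∧ r ≠ 1} (Real.sqrt 2)) := by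
  refine ⟨?_, ?_, ?_⟩
  · rintro rfl
    have h_sqrt : √((4 : ℤ) : ℝ) = 2 := by
      rw [show ((4 : ℤ) : ℝ) = 2 ^ 2 by norm_num, Real.sqrt_sq zero_le_two]
    simpa only [h_sqrt] using
      isLeast_lattice_norms_of_isLeast_triangularNormSq e he isLeast_triangularNormSq_fin_one
  · rintro rfl
    exact_mod_cast
      isLeast_lattice_norms_of_isLeast_triangularNormSq e he isLeast_triangularNormSq_fin_two
  · intro hd
    exact_mod_cast isLeast_lattice_norms_of_isLeast_triangularNormSq e he
      (isLeast_triangularNormSq_of_three_le hd)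
end
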